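/- arXiv:2409.06127 — 4 statements merged into one kernel-verified Lean document; each statement's English description precedes it below -/
import Mathlib

section
/- Let Λ be a finite label set and let L be a regular tree language over Λ. Then the set B_L = { X # Y | X ∈ L, Y ∈ L, and the pair (X, Y) is L-semibad } (the language of L-bad pairs) is a regular tree language over Option Λ. -/
/-- A finite rooted labeled binary tree over label set `Λ`. -/
inductive LTree (Λ : Type) : Type
  | leaf : Λ → LTree Λ
  | node : Λ → LTree Λ → LTree Λ → LTree Λ

/-- Topological containment of rooted labeled binary trees: the least relation such that
(i) `leaf a ≼ leaf a`; (ii) `leaf a ≼ node a T₁ T₂`; (iii) if `U ≼ T₁` or `U ≼ T₂` then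
`U ≼ node b T₁ T₂`; (iv) if (`U₁ ≼ T₁` and `U₂ ≼ T₂`) or (`U₁ ≼ T₂` and `U₂ ≼ T₁`) then
`node a U₁ U₂ ≼ node a T₁ T₂`.  (The disjunctive rules are split into two constructors each.) -/
inductive TopCont {Λ : Type} : LTree Λ → LTree Λ → Prop
  | leaf_leaf (a : Λ) : TopCont (.leaf a) (.leaf a)
  | leaf_node (a : Λ) (T₁ T₂ : LTree Λ) : TopCont (.leaf a) (.node a T₁ T₂)
  | subtree_left (U : LTree Λ) (b : Λ) (T₁ T₂ : LTree Λ) :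
      TopCont U T₁ → TopCont U (.node b T₁ T₂)
  | subtree_right (U : LTree Λ) (b : Λ) (T₁ T₂ : LTree Λ) :
      TopCont U T₂ → TopCont U (.node b T₁ T₂)
  | node_node (a : Λ) (U₁ U₂ T₁ T₂ : LTree Λ) :
      TopCont U₁ T₁ → TopCont U₂ T₂ → TopCont (.node a U₁ U₂) (.node a T₁ T₂)
  | node_node_swap (a : Λ) (U₁ U₂ T₁ T₂ : LTree Λ) :
      TopCont U₁ T₂ → TopCont U₂ T₁ → TopCont (.node a U₁ U₂) (.node a T₁ T₂)

/-- A deterministic bottom-up tree automaton over label set `Λ`. -/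
structure TreeAutomaton (Λ : Type) where
  State : Type
  fintypeState : Fintype State
  accept : Set State
  m0 : Λ → State
  m2 : Λ → State → State → State
  m2_comm : ∀ a s t, m2 a s t = m2 a t s

/-- The run of a tree automaton on a tree. -/
def TreeAutomaton.run {Λ : Type} (M : TreeAutomaton Λ) : LTree Λ → M.State
  | .leaf a => M.m0 a
  | .node a T₁ T₂ => M.m2 a (M.run T₁) (M.run T₂)

/-- A tree automaton accepts a tree if its run ends in an accepting state. -/
def TreeAutomaton.Accepts {Λ : Type} (M : TreeAutomaton Λ) (T : LTree Λ) : Prop :=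
  M.run T ∈ M.accept

/-- A set of trees is a regular tree language if some tree automaton accepts
exactly the trees in it. -/
def IsRegularTreeLang {Λ : Type} (L : Set (LTree Λ)) : Prop :=
  ∃ M : TreeAutomaton Λ, ∀ T, T ∈ L ↔ M.Accepts T

/-- Relabel a tree by applying `f` to every label. -/
def LTree.relabel {Λ Λ' : Type} (f : Λ → Λ') : LTree Λ → LTree Λ'
  | .leaf a => .leaf (f a)
  | .node a T₁ T₂ => .node (f a) (relabel f T₁) (relabel f T₂)

/-- `X # Y`: a root labeled `none` with child subtrees the `some`-relabelings of `X` and `Y`. -/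
def LTree.hash {Λ : Type} (X Y : LTree Λ) : LTree (Option Λ) :=
  .node none (X.relabel some) (Y.relabel some)

/-- `(X, Y)` is an `L`-semibad pair if no `Z ∈ L` topologically contains both `X` and `Y`. -/
def Semibad {Λ : Type} (L : Set (LTree Λ)) (X Y : LTree Λ) : Prop :=
  ¬ ∃ Z ∈ L, TopCont X Z ∧ TopCont Y Z

/-! Let `M` accept `L`. The profile of a tree `X` is the state `M.run X` together with, for every
`Y`, the set of states of the common upper bounds of `X` and `Y`; whether `(X, Y)` is `L`-bad
depends only on the profiles of `X` and `Y`. Profiles form a congruence: an embedding of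
`node a X₁ X₂` into a common upper bound can be rerouted, subtree by subtree, through any `X₁'`
with the profile of `X₁` without changing the state. They take finitely many values because
topological containment is a well-quasi-order (Kruskal's theorem for binary trees) and the sets
of common upper bounds shrink as either tree grows. So an automaton over `Option Λ` can compute
profiles below the root and decide badness at the `none`-labelled root. -/

open Set

namespace LTree

variable {Λ : Type}

def size : LTree Λ → ℕ
  | leaf _ => 1
  | node _ T₁ T₂ => T₁.size + T₂.size + 1

end LTree

namespace TopCont

variable {Λ : Type}

theorem refl : ∀ T : LTree Λ, TopCont T T
  | .leaf a => leaf_leaf a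
  | .node a T₁ T₂ => node_node a T₁ T₂ T₁ T₂ (refl T₁) (refl T₂)

theorem trans {U V W : LTree Λ} (h₁ : TopCont U V) (h₂ : TopCont V W) : TopCont U W := by
  induction h₂ generalizing U with
  | leaf_leaf => exact h₁
  | leaf_node => cases h₁; exact leaf_node _ _ _
  | subtree_left _ _ _ _ _ ih => exact subtree_left _ _ _ _ (ih h₁)
  | subtree_right _ _ _ _ _ ih => exact subtree_right _ _ _ _ (ih h₁)
  | node_node _ _ _ _ _ _ _ ih₁ ih₂ =>
    cases h₁ with
    | leaf_node => exact leaf_node _ _ _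
    | subtree_left _ _ _ _ g => exact subtree_left _ _ _ _ (ih₁ g)
    | subtree_right _ _ _ _ g => exact subtree_right _ _ _ _ (ih₂ g)
    | node_node _ _ _ _ _ g₁ g₂ => exact node_node _ _ _ _ _ (ih₁ g₁) (ih₂ g₂)
    | node_node_swap _ _ _ _ _ g₁ g₂ => exact node_node_swap _ _ _ _ _ (ih₂ g₁) (ih₁ g₂)
  | node_node_swap _ _ _ _ _ _ _ ih₁ ih₂ =>
    cases h₁ with
    | leaf_node => exact leaf_node _ _ _
    | subtree_left _ _ _ _ g => exact subtree_right _ _ _ _ (ih₁ g)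
    | subtree_right _ _ _ _ g => exact subtree_left _ _ _ _ (ih₂ g)
    | node_node _ _ _ _ _ g₁ g₂ => exact node_node_swap _ _ _ _ _ (ih₁ g₁) (ih₂ g₂)
    | node_node_swap _ _ _ _ _ g₁ g₂ => exact node_node _ _ _ _ _ (ih₂ g₁) (ih₁ g₂)

instance : IsPreorder (LTree Λ) TopCont where
  refl := refl
  trans _ _ _ := trans

theorem node_comm (a : Λ) (T₁ T₂ : LTree Λ) : TopCont (.node a T₁ T₂) (.node a T₂ T₁) :=
  node_node_swap _ _ _ _ _ (refl T₁) (refl T₂)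

theorem left_child (a : Λ) (T₁ T₂ : LTree Λ) : TopCont T₁ (.node a T₁ T₂) :=
  subtree_left _ _ _ _ (refl T₁)

theorem right_child (a : Λ) (T₁ T₂ : LTree Λ) : TopCont T₂ (.node a T₁ T₂) :=
  subtree_right _ _ _ _ (refl T₂)

theorem exists_replace_left {Y Z₁ Z₂ : LTree Λ} {b : Λ} (hY : TopCont Y (.node b Z₁ Z₂)) :
    ∃ V, TopCont V Z₁ ∧ ∀ Z₁', TopCont V Z₁' → TopCont Y (.node b Z₁' Z₂) := by
  cases hY with
  | leaf_node => exact ⟨Z₁, refl Z₁, fun _ _ => leaf_node _ _ _⟩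
  | subtree_left _ _ _ _ h => exact ⟨Y, h, fun _ h' => subtree_left _ _ _ _ h'⟩
  | subtree_right _ _ _ _ h => exact ⟨Z₁, refl Z₁, fun _ _ => subtree_right _ _ _ _ h⟩
  | node_node _ Y₁ _ _ _ h₁ h₂ => exact ⟨Y₁, h₁, fun _ h' => node_node _ _ _ _ _ h' h₂⟩
  | node_node_swap _ _ Y₂ _ _ h₁ h₂ => exact ⟨Y₂, h₂, fun _ h' => node_node_swap _ _ _ _ _ h₁ h'⟩

theorem exists_replace_right {Y Z₁ Z₂ : LTree Λ} {b : Λ} (hY : TopCont Y (.node b Z₁ Z₂)) :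
    ∃ V, TopCont V Z₂ ∧ ∀ Z₂', TopCont V Z₂' → TopCont Y (.node b Z₁ Z₂') := by
  obtain ⟨V, hV, hrepl⟩ := (hY.trans (node_comm b Z₁ Z₂)).exists_replace_left
  exact ⟨V, hV, fun Z₂' h => (hrepl Z₂' h).trans (node_comm b Z₂' Z₁)⟩

end TopCont

section MinimalBadSequence

open Set.PartiallyWellOrderedOn

variable {α : Type*} {r : α → α → Prop} {rk : α → ℕ} {f : ℕ → α}

/-- Nash-Williams: a bad sequence of such elements, spliced onto `f` at the first index they come
from, would be a bad sequence of smaller rank there. -/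
theorem partiallyWellOrderedOn_of_isMinBadSeq [IsTrans α r] (hf : IsBadSeq r univ f)
    (hmin : ∀ n, IsMinBadSeq r rk univ n f) :
    {x | ∃ n, r x (f n) ∧ rk x < rk (f n)}.PartiallyWellOrderedOn r := by
  rw [partiallyWellOrderedOn_iff_exists_lt]
  intro g hg
  by_contra! hgbad
  choose n hgn hrk using hg
  set k₀ := Function.argmin n
  set m₀ := n k₀
  let h : ℕ → α := fun m => if m < m₀ then f m else g (k₀ + (m - m₀))
  refine hmin m₀ h (fun m hm => (if_pos hm).symm) (by simpa [h, m₀] using hrk k₀)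
    ⟨fun _ => trivial, fun i j hij hr => ?_⟩
  by_cases hj : j < m₀
  · simp only [h, if_pos hj, if_pos (hij.trans hj)] at hr
    exact hf.2 i j hij hr
  by_cases hi : i < m₀
  · simp only [h, if_pos hi, if_neg hj] at hr
    exact hf.2 i _ (hi.trans_le (Function.argmin_le n _)) (_root_.trans hr (hgn _))
  · simp only [h, if_neg hi, if_neg hj] at hr
    exact hgbad _ _ (by omega) hr

end MinimalBadSequence

theorem wellQuasiOrdered_topCont {Λ : Type} [Finite Λ] : WellQuasiOrdered (@TopCont Λ) := by
  rw [← Set.partiallyWellOrderedOn_univ_iff,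
    Set.PartiallyWellOrderedOn.iff_not_exists_isMinBadSeq LTree.size]
  rintro ⟨f, hf, hmin⟩
  set S := {x | ∃ n, TopCont x (f n) ∧ x.size < (f n).size}
  have hS : S.PartiallyWellOrderedOn TopCont := partiallyWellOrderedOn_of_isMinBadSeq hf hmin
  have hnodes : ((fun p : Λ × LTree Λ × LTree Λ => LTree.node p.1 p.2.1 p.2.2) ''
      (univ ×ˢ S ×ˢ S)).PartiallyWellOrderedOn TopCont :=
    ((Set.finite_univ.partiallyWellOrderedOn (r := (· = ·))).prod (hS.prod hS)).image_of_monotone_on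
      (by rintro ⟨a, _, _⟩ - ⟨_, _, _⟩ - ⟨rfl, h₁, h₂⟩; exact .node_node _ _ _ _ _ h₁ h₂)
  have hleaves : (range (@LTree.leaf Λ)).PartiallyWellOrderedOn TopCont :=
    (Set.finite_range _).partiallyWellOrderedOn
  have hmem : ∀ n, f n ∈ range LTree.leaf ∪ (fun p : Λ × LTree Λ × LTree Λ =>
      LTree.node p.1 p.2.1 p.2.2) '' (univ ×ˢ S ×ˢ S) := by
    intro n
    cases hfn : f n with
    | leaf a => exact .inl ⟨a, rfl⟩
    | node a T₁ T₂ =>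
      refine .inr ⟨(a, T₁, T₂), ⟨trivial, ⟨n, ?_, ?_⟩, ⟨n, ?_, ?_⟩⟩, rfl⟩ <;>
        simp only [hfn, TopCont.left_child, TopCont.right_child, LTree.size] <;> omega
  obtain ⟨i, j, hij, hrel⟩ := (hleaves.union hnodes).exists_lt hmem
  exact hf.2 i j hij hrel

/-- Along a strictly decreasing chain `F x₀ ⊋ F x₁ ⊋ ⋯` taken from a monotone subsequence, the
witnesses `(sᵢ, yᵢ)` of `sᵢ ∈ F xᵢ yᵢ \ F xᵢ₊₁ yᵢ` would form a bad sequence. -/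
theorem finite_range_of_antitone_of_wellQuasiOrdered {α β σ : Type*} [Finite σ]
    {r : α → α → Prop} {r' : β → β → Prop} [IsPreorder α r]
    (hr : WellQuasiOrdered r) (hr' : WellQuasiOrdered r') (F : α → β → Set σ)
    (hF₁ : ∀ x x' y, r x x' → F x' y ⊆ F x y) (hF₂ : ∀ x y y', r' y y' → F x y' ⊆ F x y) :
    (range F).Finite := by
  rw [← Set.not_infinite]
  intro hinf
  choose x hx using fun i => (hinf.natEmbedding _ i).2
  obtain ⟨g, hg⟩ := hr.exists_monotone_subseq x
  have hanti : ∀ i j, i ≤ j → ∀ y, F (x (g j)) y ⊆ F (x (g i)) y :=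
    fun i j hij y => hF₁ _ _ y (hg i j hij)
  have hstep : ∀ i, ∃ s y, s ∈ F (x (g i)) y ∧ s ∉ F (x (g (i + 1))) y := by
    intro i
    by_contra! hsame
    have hne : g i ≠ g (i + 1) := g.injective.ne (by omega)
    refine hne ((hinf.natEmbedding _).injective (Subtype.ext ?_))
    rw [← hx, ← hx]
    funext y
    exact Set.Subset.antisymm (hsame · y) (hanti i (i + 1) (by omega) y)
  choose s y hmem hnot using hstep
  obtain ⟨i, j, hij, hs, hy⟩ :=
    ((Finite.wellQuasiOrdered (· = ·)).prod hr') fun i => (s i, y i)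
  have hs : s i = s j := hs
  have : s i ∈ F (x (g j)) (y i) := hF₂ _ _ _ hy (hs ▸ hmem j)
  exact hnot i (hanti (i + 1) j hij _ this)

namespace TreeAutomaton

attribute [instance] fintypeState

variable {Λ : Type} (M : TreeAutomaton Λ)

theorem run_node (a : Λ) (T₁ T₂ : LTree Λ) :
    M.run (.node a T₁ T₂) = M.m2 a (M.run T₁) (M.run T₂) := rfl

theorem run_node_comm (a : Λ) (T₁ T₂ : LTree Λ) :
    M.run (.node a T₁ T₂) = M.run (.node a T₂ T₁) := M.m2_comm _ _ _

def jointRuns (X Y : LTree Λ) : Set M.State :=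
  {s | ∃ Z, M.run Z = s ∧ TopCont X Z ∧ TopCont Y Z}

theorem jointRuns_comm (X Y : LTree Λ) : M.jointRuns X Y = M.jointRuns Y X := by
  ext s
  exact ⟨fun ⟨Z, h, hX, hY⟩ => ⟨Z, h, hY, hX⟩, fun ⟨Z, h, hY, hX⟩ => ⟨Z, h, hX, hY⟩⟩

theorem jointRuns_anti_left {X X' : LTree Λ} (h : TopCont X X') (Y : LTree Λ) :
    M.jointRuns X' Y ⊆ M.jointRuns X Y :=
  fun _ ⟨Z, hZ, hX, hY⟩ => ⟨Z, hZ, h.trans hX, hY⟩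

theorem jointRuns_anti_right (X : LTree Λ) {Y Y' : LTree Λ} (h : TopCont Y Y') :
    M.jointRuns X Y' ⊆ M.jointRuns X Y :=
  fun _ ⟨Z, hZ, hX, hY⟩ => ⟨Z, hZ, hX, h.trans hY⟩

theorem jointRuns_node_comm (a : Λ) (X₁ X₂ : LTree Λ) :
    M.jointRuns (.node a X₁ X₂) = M.jointRuns (.node a X₂ X₁) :=
  funext fun Y => (M.jointRuns_anti_left (.node_comm a X₂ X₁) Y).antisymm
    (M.jointRuns_anti_left (.node_comm a X₁ X₂) Y)

/-- Inside a common upper bound `Z`, the copy of `X₁` can be traded for one of `X₁'` without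
changing the state: descend to the subtree `Z₁` holding the image of `X₁` and replace it by a tree
with the same state containing `X₁'` and the part of `Y` that `Z₁` carried. -/
theorem jointRuns_node_subset_of_eq {X₁ X₁' : LTree Λ} (h : M.jointRuns X₁ = M.jointRuns X₁')
    (a : Λ) (X₂ Y : LTree Λ) :
    M.jointRuns (.node a X₁ X₂) Y ⊆ M.jointRuns (.node a X₁' X₂) Y := by
  rintro _ ⟨Z, rfl, hX, hY⟩
  induction Z generalizing Y with
  | leaf => cases hX
  | node b Z₁ Z₂ ih₁ ih₂ =>
    cases hX with
    | subtree_left _ _ _ _ hX₁ =>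
      obtain ⟨V, hV, hrepl⟩ := hY.exists_replace_left
      obtain ⟨Z₁', hrun, hX', hV'⟩ := ih₁ V hX₁ hV
      exact ⟨.node b Z₁' Z₂, by rw [run_node, run_node, hrun], .subtree_left _ _ _ _ hX',
        hrepl Z₁' hV'⟩
    | subtree_right _ _ _ _ hX₂ =>
      obtain ⟨V, hV, hrepl⟩ := hY.exists_replace_right
      obtain ⟨Z₂', hrun, hX', hV'⟩ := ih₂ V hX₂ hV
      exact ⟨.node b Z₁ Z₂', by rw [run_node, run_node, hrun], .subtree_right _ _ _ _ hX',
        hrepl Z₂' hV'⟩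
    | node_node _ _ _ _ _ hX₁ hX₂ =>
      obtain ⟨V, hV, hrepl⟩ := hY.exists_replace_left
      obtain ⟨Z₁', hrun, hX', hV'⟩ : M.run Z₁ ∈ M.jointRuns X₁' V := h ▸ ⟨Z₁, rfl, hX₁, hV⟩
      exact ⟨.node a Z₁' Z₂, by rw [run_node, run_node, hrun], .node_node _ _ _ _ _ hX' hX₂,
        hrepl Z₁' hV'⟩
    | node_node_swap _ _ _ _ _ hX₁ hX₂ =>
      obtain ⟨V, hV, hrepl⟩ := hY.exists_replace_right
      obtain ⟨Z₂', hrun, hX', hV'⟩ : M.run Z₂ ∈ M.jointRuns X₁' V := h ▸ ⟨Z₂, rfl, hX₁, hV⟩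
      exact ⟨.node a Z₁ Z₂', by rw [run_node, run_node, hrun], .node_node_swap _ _ _ _ _ hX' hX₂,
        hrepl Z₂' hV'⟩

theorem jointRuns_node_congr_left {X₁ X₁' : LTree Λ} (h : M.jointRuns X₁ = M.jointRuns X₁')
    (a : Λ) (X₂ : LTree Λ) : M.jointRuns (.node a X₁ X₂) = M.jointRuns (.node a X₁' X₂) :=
  funext fun Y => (M.jointRuns_node_subset_of_eq h a X₂ Y).antisymm
    (M.jointRuns_node_subset_of_eq h.symm a X₂ Y)

def profile (X : LTree Λ) : M.State × (LTree Λ → Set M.State) :=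
  (M.run X, M.jointRuns X)

theorem profile_node_comm (a : Λ) (X₁ X₂ : LTree Λ) :
    M.profile (.node a X₁ X₂) = M.profile (.node a X₂ X₁) :=
  Prod.ext (M.run_node_comm a X₁ X₂) (M.jointRuns_node_comm a X₁ X₂)

theorem profile_node_congr (a : Λ) {X₁ X₁' X₂ X₂' : LTree Λ}
    (h₁ : M.profile X₁ = M.profile X₁') (h₂ : M.profile X₂ = M.profile X₂') :
    M.profile (.node a X₁ X₂) = M.profile (.node a X₁' X₂') := by
  obtain ⟨hrun₁, hjoint₁⟩ : M.run X₁ = M.run X₁' ∧ M.jointRuns X₁ = M.jointRuns X₁' :=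
    Prod.ext_iff.1 h₁
  obtain ⟨hrun₂, hjoint₂⟩ : M.run X₂ = M.run X₂' ∧ M.jointRuns X₂ = M.jointRuns X₂' :=
    Prod.ext_iff.1 h₂
  refine Prod.ext (congrArg₂ (M.m2 a) hrun₁ hrun₂) ?_
  calc M.jointRuns (.node a X₁ X₂)
      = M.jointRuns (.node a X₁' X₂) := M.jointRuns_node_congr_left hjoint₁ a X₂
    _ = M.jointRuns (.node a X₂ X₁') := M.jointRuns_node_comm a X₁' X₂
    _ = M.jointRuns (.node a X₂' X₁') := M.jointRuns_node_congr_left hjoint₂ a X₁'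
    _ = M.jointRuns (.node a X₁' X₂') := M.jointRuns_node_comm a X₂' X₁'

theorem finite_range_profile [Finite Λ] : (range M.profile).Finite := by
  have hjoint : (range M.jointRuns).Finite :=
    finite_range_of_antitone_of_wellQuasiOrdered wellQuasiOrdered_topCont
      wellQuasiOrdered_topCont M.jointRuns (fun _ _ y h => M.jointRuns_anti_left h y)
      (fun x _ _ h => M.jointRuns_anti_right x h)
  exact (Set.finite_univ.prod hjoint).subset (range_subset_iff.2 fun X => ⟨trivial, X, rfl⟩)

theorem jointRuns_eq_of_profile_eq {X X' Y Y' : LTree Λ} (hX : M.profile X = M.profile X')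
    (hY : M.profile Y = M.profile Y') : M.jointRuns X Y = M.jointRuns X' Y' := by
  have hX : M.jointRuns X = M.jointRuns X' := congrArg Prod.snd hX
  have hY : M.jointRuns Y = M.jointRuns Y' := congrArg Prod.snd hY
  rw [hX, jointRuns_comm, hY, jointRuns_comm]

theorem semibad_iff_disjoint_jointRuns {L : Set (LTree Λ)} (hM : ∀ T, T ∈ L ↔ M.Accepts T)
    (X Y : LTree Λ) : Semibad L X Y ↔ Disjoint (M.jointRuns X Y) M.accept := by
  rw [Set.disjoint_left]
  exact ⟨fun h _ ⟨Z, hZ, hX, hY⟩ hacc => h ⟨Z, (hM Z).2 (by rwa [Accepts, hZ]), hX, hY⟩,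
    fun h ⟨Z, hZ, hX, hY⟩ => h ⟨Z, rfl, hX, hY⟩ ((hM Z).1 hZ)⟩

end TreeAutomaton

theorem Semibad.symm {Λ : Type} {L : Set (LTree Λ)} {X Y : LTree Λ} (h : Semibad L X Y) :
    Semibad L Y X :=
  fun ⟨Z, hZ, hY, hX⟩ => h ⟨Z, hZ, hX, hY⟩

section HashAutomaton

variable {Λ β : Type} (f : LTree Λ → β) (hfin : (range f).Finite)
  (hcomm : ∀ a X₁ X₂, f (.node a X₁ X₂) = f (.node a X₂ X₁))
  (B : LTree Λ → LTree Λ → Prop) (hB : ∀ X Y, B X Y → B Y X)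

/-- On `relabel some X` the automaton computes `f X`, reading children through representatives;
at a `none`-labelled root over two such states it decides `B`; every other tree is rejected. -/
noncomputable def hashAutomaton : TreeAutomaton (Option Λ) :=
  open Classical in
  { State := range f ⊕ Bool
    fintypeState := have := hfin.fintype; inferInstance
    accept := {.inr true}
    m0 := fun
      | some a => .inl ⟨f (.leaf a), mem_range_self _⟩
      | none => .inr false
    m2 := fun
      | some a, .inl p, .inl q =>
        .inl ⟨f (.node a (rangeSplitting f p) (rangeSplitting f q)), mem_range_self _⟩
      | none, .inl p, .inl q => .inr (decide (B (rangeSplitting f p) (rangeSplitting f q)))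
      | _, _, _ => .inr false
    m2_comm := by
      rintro (_ | a) (p | _) (q | _) <;> try rfl
      · exact congrArg Sum.inr (decide_eq_decide.2 ⟨hB _ _, hB _ _⟩)
      · exact congrArg Sum.inl (Subtype.ext (hcomm _ _ _)) }

variable {f hfin hcomm B hB}

theorem hashAutomaton_run_relabel
    (hnode : ∀ a X₁ X₁' X₂ X₂', f X₁ = f X₁' → f X₂ = f X₂' →
      f (.node a X₁ X₂) = f (.node a X₁' X₂'))
    (X : LTree Λ) :
    (hashAutomaton f hfin hcomm B hB).run (X.relabel some) = .inl ⟨f X, mem_range_self X⟩ := by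
  induction X with
  | leaf a => rfl
  | node a X₁ X₂ ih₁ ih₂ =>
    rw [LTree.relabel, TreeAutomaton.run_node, ih₁, ih₂]
    exact congrArg Sum.inl (Subtype.ext (hnode _ _ _ _ _
      (apply_rangeSplitting f _) (apply_rangeSplitting f _)))

theorem hashAutomaton_exists_relabel_of_run_eq_inl {T : LTree (Option Λ)} {p : range f}
    (h : (hashAutomaton f hfin hcomm B hB).run T = .inl p) :
    ∃ X : LTree Λ, T = X.relabel some := by
  induction T generalizing p with
  | leaf a =>
    cases a with
    | none => cases h
    | some a => exact ⟨.leaf a, rfl⟩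
  | node a T₁ T₂ ih₁ ih₂ =>
    rw [TreeAutomaton.run_node] at h
    rcases a with _ | a <;> rcases h₁ : (hashAutomaton f hfin hcomm B hB).run T₁ with p₁ | _ <;>
      rcases h₂ : (hashAutomaton f hfin hcomm B hB).run T₂ with p₂ | _ <;>
      rw [h₁, h₂] at h <;> try cases h
    obtain ⟨X₁, rfl⟩ := ih₁ h₁
    obtain ⟨X₂, rfl⟩ := ih₂ h₂
    exact ⟨.node a X₁ X₂, rfl⟩

end HashAutomaton

theorem isRegularTreeLang_hash_of_congr {Λ β : Type} (f : LTree Λ → β) (hfin : (range f).Finite)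
    (hnode : ∀ a X₁ X₁' X₂ X₂', f X₁ = f X₁' → f X₂ = f X₂' →
      f (.node a X₁ X₂) = f (.node a X₁' X₂'))
    (hcomm : ∀ a X₁ X₂, f (.node a X₁ X₂) = f (.node a X₂ X₁))
    (B : LTree Λ → LTree Λ → Prop) (hB : ∀ X Y, B X Y → B Y X)
    (hBf : ∀ X X' Y Y', f X = f X' → f Y = f Y' → B X Y → B X' Y') :
    IsRegularTreeLang {W | ∃ X Y, B X Y ∧ W = LTree.hash X Y} := by
  classical
  have hrep : ∀ X, f (rangeSplitting f ⟨f X, mem_range_self X⟩) = f X :=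
    fun X => apply_rangeSplitting f _
  refine ⟨hashAutomaton f hfin hcomm B hB, fun T => ⟨?_, fun hacc => ?_⟩⟩
  · rintro ⟨X, Y, hXY, rfl⟩
    rw [TreeAutomaton.Accepts, LTree.hash, TreeAutomaton.run_node,
      hashAutomaton_run_relabel hnode, hashAutomaton_run_relabel hnode]
    exact congrArg Sum.inr (decide_eq_true (hBf _ _ _ _ (hrep X).symm (hrep Y).symm hXY))
  · cases T with
    | leaf a => cases a <;> cases hacc
    | node a T₁ T₂ =>
      rw [TreeAutomaton.Accepts, TreeAutomaton.run_node] at hacc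
      rcases a with _ | a <;> rcases h₁ : (hashAutomaton f hfin hcomm B hB).run T₁ with p₁ | _ <;>
        rcases h₂ : (hashAutomaton f hfin hcomm B hB).run T₂ with p₂ | _ <;>
        rw [h₁, h₂] at hacc <;> try cases hacc
      obtain ⟨X, rfl⟩ := hashAutomaton_exists_relabel_of_run_eq_inl h₁
      obtain ⟨Y, rfl⟩ := hashAutomaton_exists_relabel_of_run_eq_inl h₂
      rw [hashAutomaton_run_relabel hnode] at h₁ h₂
      cases h₁
      cases h₂
      have hbad := of_decide_eq_true (Sum.inr.inj hacc)
      exact ⟨X, Y, hBf _ _ _ _ (hrep X) (hrep Y) hbad, rfl⟩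

/-- if `L` is a regular tree language over a finite label set `Λ`, then the
language `B_L = { X # Y | X ∈ L, Y ∈ L, (X, Y) is L-semibad }` of `L`-bad pairs is
regular over `Option Λ`. -/
theorem bad_pairs_regular {Λ : Type} [Fintype Λ] (L : Set (LTree Λ))
    (hL : IsRegularTreeLang L) :
    IsRegularTreeLang {W : LTree (Option Λ) |
      ∃ X Y : LTree Λ, X ∈ L ∧ Y ∈ L ∧ Semibad L X Y ∧ W = LTree.hash X Y} := by
  obtain ⟨M, hM⟩ := hL
  have hbad : ∀ X X' Y Y', M.profile X = M.profile X' → M.profile Y = M.profile Y' →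
      X ∈ L ∧ Y ∈ L ∧ Semibad L X Y → X' ∈ L ∧ Y' ∈ L ∧ Semibad L X' Y' := by
    intro X X' Y Y' hX hY
    have hrunX : M.run X = M.run X' := congrArg Prod.fst hX
    have hrunY : M.run Y = M.run Y' := congrArg Prod.fst hY
    simp only [hM, TreeAutomaton.Accepts, M.semibad_iff_disjoint_jointRuns hM,
      M.jointRuns_eq_of_profile_eq hX hY, hrunX, hrunY, imp_self]
  simpa only [and_assoc] using isRegularTreeLang_hash_of_congr M.profile M.finite_range_profile
    (fun a _ _ _ _ => M.profile_node_congr a) M.profile_node_comm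
    (fun X Y => X ∈ L ∧ Y ∈ L ∧ Semibad L X Y) (fun _ _ ⟨hX, hY, h⟩ => ⟨hY, hX, h.symm⟩) hbad
end

section
/- Let Λ be a finite label set and let M be a tree automaton over Λ with finite state type Σ. If M accepts at least one tree, then M accepts a tree whose depth (the number of vertices on a longest root-to-leaf path) is at most the cardinality of Σ. (Hence emptiness of the language of a tree automaton is decidable by checking finitely many trees.) -/
/-- The depth of a tree: the number of vertices on a longest root-to-leaf path. -/
def LTree.depth {Λ : Type} : LTree Λ → ℕ
  | .leaf _ => 1
  | .node _ T₁ T₂ => 1 + max T₁.depth T₂.depth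

/-- States reachable by trees of depth at most `n`. -/
def Reach {Λ : Type} (M : TreeAutomaton Λ) (n : ℕ) : Set M.State :=
  {s | ∃ T : LTree Λ, M.run T = s ∧ T.depth ≤ n}

lemma reach_mono {Λ : Type} (M : TreeAutomaton Λ) {m n : ℕ} (h : m ≤ n) :
    Reach M m ⊆ Reach M n := by
  rintro s ⟨T, hT, hd⟩; exact ⟨T, hT, le_trans hd h⟩

lemma reach_step {Λ : Type} (M : TreeAutomaton Λ) {n : ℕ}
    (h : Reach M n = Reach M (n+1)) : Reach M (n+1) = Reach M (n+2) := by
  apply Set.Subset.antisymm (reach_mono M (by omega))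
  rintro s ⟨T, rfl, hd⟩
  cases T with
  | leaf a => exact ⟨.leaf a, rfl, by simp [LTree.depth]⟩
  | node a T1 T2 =>
    simp only [LTree.depth] at hd
    have h1 : M.run T1 ∈ Reach M n := h ▸ ⟨T1, rfl, by omega⟩
    have h2 : M.run T2 ∈ Reach M n := h ▸ ⟨T2, rfl, by omega⟩
    obtain ⟨T1', e1, d1⟩ := h1
    obtain ⟨T2', e2, d2⟩ := h2
    refine ⟨.node a T1' T2', ?_, ?_⟩
    · simp [TreeAutomaton.run, e1, e2]
    · simp only [LTree.depth]; omega

lemma reach_stable {Λ : Type} (M : TreeAutomaton Λ) {k : ℕ}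
    (h : Reach M k = Reach M (k+1)) :
    ∀ j, Reach M (k+j) = Reach M (k+j+1) := by
  intro j
  induction j with
  | zero => exact h
  | succ j ih =>
    have := reach_step M ih
    have e : k + (j + 1) = k + j + 1 := by omega
    rw [e, show k+j+1+1 = k+j+2 from rfl]
    exact this

lemma reach_eq {Λ : Type} (M : TreeAutomaton Λ) {k : ℕ}
    (h : Reach M k = Reach M (k+1)) : ∀ m, k ≤ m → Reach M m = Reach M k := by
  intro m hm
  obtain ⟨j, rfl⟩ := Nat.exists_eq_add_of_le hm
  induction j with
  | zero => rfl
  | succ j ih =>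
    have h1 := reach_stable M h j
    have : Reach M (k + (j+1)) = Reach M (k + j) := by
      rw [show k+(j+1) = k+j+1 from by omega]; exact h1.symm
    rw [this]; exact ih (by omega)

/-- if a tree automaton over a finite label set accepts some tree, then it
accepts a tree of depth at most the number of its states. -/
theorem accepts_small_tree {Λ : Type} [Fintype Λ] (M : TreeAutomaton Λ)
    (h : ∃ T, M.Accepts T) :
    ∃ T, M.Accepts T ∧ T.depth ≤ @Fintype.card M.State M.fintypeState := by
  haveI := M.fintypeState
  set c := @Fintype.card M.State M.fintypeState with hc
  -- find a stabilization point k ≤ c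
  have hstab : ∃ k ≤ c, Reach M k = Reach M (k+1) := by
    by_contra hcon
    push_neg at hcon
    have key : ∀ k, k ≤ c + 1 → k ≤ (Reach M k).ncard := by
      intro k hk
      induction k with
      | zero => omega
      | succ k ih =>
        have hss : Reach M k ⊂ Reach M (k+1) :=
          lt_of_le_of_ne (reach_mono M (by omega)) (hcon k (by omega))
        have := Set.ncard_lt_ncard hss (Set.toFinite _)
        have := ih (by omega)
        omega
    have h1 := key (c+1) le_rfl
    have h2 : (Reach M (c+1)).ncard ≤ c := by
      have h3 := Set.ncard_le_ncard (Set.subset_univ (Reach M (c+1))) (Set.toFinite _)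
      rw [Set.ncard_univ, Nat.card_eq_fintype_card] at h3
      rw [hc]
      convert h3 using 2
    omega
  obtain ⟨k, hkc, hk⟩ := hstab
  obtain ⟨T, hT⟩ := h
  have hmem : M.run T ∈ Reach M (max k T.depth) := ⟨T, rfl, le_max_right _ _⟩
  rw [reach_eq M hk _ (le_max_left _ _)] at hmem
  have hmem' : M.run T ∈ Reach M c := reach_mono M hkc hmem
  obtain ⟨T', hT', hd⟩ := hmem'
  exact ⟨T', by rw [TreeAutomaton.Accepts, hT']; exact hT, hd⟩
end

section
/- Let α be a finite type and let L be a regular language of words over α. Then the language over Option α consisting of all words (x.map some) ++ [none] ++ (y.map some), where (x, y) ranges over all L-bad pairs (i.e., x ∈ L, y ∈ L, and there is no z ∈ L with x ⊑ z and y ⊑ z), is a regular language. Consequently, L has the joint embedding property under the subword order if and only if this language is empty. -/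
/-!
Pairs of words with no common superword in `L` form an upward-closed set for the product of the
subword orders, which is a well-quasi-order by Higman's lemma; hence this set is the upward
closure of finitely many pairs `(u, v)`. The bad pairs are therefore a finite union of products
`(L ∩ ↑u) × (L ∩ ↑v)`, and each encoded product `x # y` is regular by Myhill–Nerode: its left
quotients are `P' # R`, `R'` (after the separator) or `∅`, for left quotients `P'` of `L ∩ ↑u`
and `R'` of `L ∩ ↑v`.
-/

/-- `(x, y)` is an `L`-bad pair of words if `x ∈ L`, `y ∈ L`, and no `z ∈ L` contains
both `x` and `y` as (not necessarily contiguous) subwords. -/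
def WordBad {α : Type} (L : Language α) (x y : List α) : Prop :=
  x ∈ L ∧ y ∈ L ∧ ¬ ∃ z ∈ L, x.Sublist z ∧ y.Sublist z

/-- The language of `L`-bad pairs, encoded as `(x.map some) ++ [none] ++ (y.map some)`. -/
def badPairLanguage {α : Type} (L : Language α) : Language (Option α) :=
  {w : List (Option α) | ∃ x y : List α, WordBad L x y ∧
    w = (x.map some) ++ [none] ++ (y.map some)}

open List

theorem WellQuasiOrdered.exists_finset_basis {β : Type*} {r : β → β → Prop}
    (hr : WellQuasiOrdered r) {U : Set β} (hU : ∀ a ∈ U, ∀ b, r a b → b ∈ U) :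
    ∃ F : Finset β, ∀ b, b ∈ U ↔ ∃ a ∈ F, r a b := by
  classical
  -- Otherwise, picking elements of `U` above none of the earlier picks yields a bad sequence.
  by_contra! hF
  have hnext : ∀ F : Finset β, ∃ b, (F : Set β) ⊆ U → b ∈ U ∧ ∀ a ∈ F, ¬ r a b := by
    intro F
    obtain ⟨b, hb | ⟨hbU, a, ha, hab⟩⟩ := hF F
    · exact ⟨b, fun _ => hb⟩
    · exact ⟨b, fun hFU => absurd (hU a (hFU ha) b hab) hbU⟩
  choose next hnext using hnext
  let S : ℕ → Finset β := fun n => Nat.rec ∅ (fun _ F => insert (next F) F) n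
  have hSU : ∀ n, ∀ a ∈ S n, a ∈ U := by
    intro n
    induction n with
    | zero => simp [S]
    | succ n ih =>
      intro a ha
      rcases Finset.mem_insert.1 ha with rfl | ha
      · exact (hnext _ ih).1
      · exact ih a ha
  have hSmem : ∀ m n, m < n → next (S m) ∈ S n := by
    intro m n hmn
    induction n with
    | zero => omega
    | succ n ih =>
      rcases Nat.lt_succ_iff_lt_or_eq.1 hmn with h | rfl
      · exact Finset.mem_insert_of_mem (ih h)
      · exact Finset.mem_insert_self _ _
  obtain ⟨m, n, hmn, hr⟩ := hr fun n => next (S n)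
  exact (hnext _ (hSU n)).2 _ (hSmem m n hmn) hr

namespace List

theorem sublistForall₂_eq_iff {α : Type*} {l₁ l₂ : List α} :
    SublistForall₂ (· = ·) l₁ l₂ ↔ l₁ <+ l₂ := by
  simp [sublistForall₂_iff, forall₂_eq_eq_eq]

instance isPreorder_sublist {α : Type*} : IsPreorder (List α) Sublist where
  refl := Sublist.refl
  trans _ _ _ := Sublist.trans

theorem wellQuasiOrdered_sublist {α : Type*} [Finite α] : WellQuasiOrdered (@Sublist α) := by
  have hα := Set.finite_univ.partiallyWellOrderedOn (r := ((· = ·) : α → α → Prop))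
  intro f
  obtain ⟨m, n, hmn, h⟩ := Set.partiallyWellOrderedOn_iff_exists_lt.1
    (hα.partiallyWellOrderedOn_sublistForall₂ _) f fun _ _ _ => Set.mem_univ _
  exact ⟨m, n, hmn, sublistForall₂_eq_iff.1 h⟩

end List

namespace Language

variable {α : Type*}

theorem IsRegular.of_leftQuotient_mem {L : Language α} {S : Set (Language α)} (hS : S.Finite)
    (hL : L ∈ S) (hstep : ∀ K ∈ S, ∀ a, K.leftQuotient [a] ∈ S) : L.IsRegular := by
  refine .of_finite_range_leftQuotient (hS.subset ?_)
  rintro _ ⟨x, rfl⟩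
  induction x using List.reverseRecOn with
  | nil => exact hL
  | append_singleton x a ih => rw [leftQuotient_append]; exact hstep _ ih a

theorem isRegular_zero : (0 : Language α).IsRegular :=
  .of_leftQuotient_mem (Set.finite_singleton 0) rfl fun _ hK _ => by rw [hK]; rfl

theorem IsRegular.finset_sup {ι : Type*} {s : Finset ι} {f : ι → Language α}
    (h : ∀ i ∈ s, (f i).IsRegular) : (s.sup f).IsRegular :=
  Finset.sup_induction isRegular_zero (fun _ h₁ _ h₂ => h₁.add h₂) h

def superwords (a : List α) : Language α :=
  {x | a <+ x}

@[simp]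
theorem mem_superwords {a x : List α} : x ∈ superwords a ↔ a <+ x := Iff.rfl

theorem isRegular_superwords (a : List α) : (superwords a).IsRegular := by
  refine .of_leftQuotient_mem (S := superwords '' {b | b <:+ a}) ?_ ⟨a, suffix_refl a, rfl⟩ ?_
  · simp_rw [← mem_tails]
    exact (finite_toSet _).image _
  · rintro _ ⟨b, hb, rfl⟩ c
    rcases b with _ | ⟨d, b⟩
    · exact ⟨[], hb, by ext x; simp⟩
    · by_cases hdc : d = c
      · subst hdc
        exact ⟨b, (suffix_cons d b).trans hb, by ext x; simp⟩
      · exact ⟨d :: b, hb, by ext x; simp [sublist_cons_iff, hdc]⟩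

theorem mem_map_iff {β : Type*} (f : α → β) (l : Language α) (w : List β) :
    w ∈ map f l ↔ ∃ x ∈ l, x.map f = w := Iff.rfl

theorem leftQuotient_map_some_some (R : Language α) (a : α) :
    (map some R).leftQuotient [some a] = map some (R.leftQuotient [a]) := by
  ext w
  simp only [mem_leftQuotient, mem_map_iff]
  constructor
  · rintro ⟨_ | ⟨b, x⟩, hx, h⟩
    · simp at h
    · obtain ⟨rfl, rfl⟩ : b = a ∧ x.map some = w := by simpa using h
      exact ⟨x, hx, rfl⟩
  · rintro ⟨x, hx, rfl⟩
    exact ⟨a :: x, hx, rfl⟩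

theorem leftQuotient_map_some_none (R : Language α) :
    (map some R).leftQuotient [none] = 0 := by
  ext w
  simp only [mem_leftQuotient, mem_map_iff]
  refine iff_of_false ?_ (notMem_zero w)
  rintro ⟨_ | ⟨b, x⟩, -, h⟩ <;> simp at h

def sepConcat (P R : Language α) : Language (Option α) :=
  {w | ∃ x ∈ P, ∃ y ∈ R, w = x.map some ++ [none] ++ y.map some}

theorem mem_sepConcat {P R : Language α} {w : List (Option α)} :
    w ∈ sepConcat P R ↔ ∃ x ∈ P, ∃ y ∈ R, w = x.map some ++ [none] ++ y.map some := Iff.rfl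

variable {P R : Language α}

theorem leftQuotient_sepConcat_some (a : α) :
    (sepConcat P R).leftQuotient [some a] = sepConcat (P.leftQuotient [a]) R := by
  ext w
  simp only [mem_leftQuotient, mem_sepConcat]
  constructor
  · rintro ⟨_ | ⟨b, x⟩, hx, y, hy, h⟩
    · simp at h
    · obtain ⟨rfl, rfl⟩ : a = b ∧ w = x.map some ++ [none] ++ y.map some := by simpa using h
      exact ⟨x, hx, y, hy, rfl⟩
  · rintro ⟨x, hx, y, hy, rfl⟩
    exact ⟨a :: x, hx, y, hy, rfl⟩

theorem leftQuotient_sepConcat_none_of_nil_mem (hP : [] ∈ P) :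
    (sepConcat P R).leftQuotient [none] = map some R := by
  ext w
  simp only [mem_leftQuotient, mem_sepConcat]
  constructor
  · rintro ⟨_ | ⟨b, x⟩, -, y, hy, h⟩
    · exact ⟨y, hy, by simpa using h.symm⟩
    · simp at h
  · rintro ⟨y, hy, rfl⟩
    exact ⟨[], hP, y, hy, rfl⟩

theorem leftQuotient_sepConcat_none_of_nil_notMem (hP : [] ∉ P) :
    (sepConcat P R).leftQuotient [none] = 0 := by
  ext w
  simp only [mem_leftQuotient, mem_sepConcat]
  refine iff_of_false ?_ (notMem_zero w)
  rintro ⟨_ | ⟨b, x⟩, hx, y, -, h⟩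
  · exact hP hx
  · simp at h

theorem IsRegular.sepConcat (hP : P.IsRegular) (hR : R.IsRegular) :
    (sepConcat P R).IsRegular := by
  refine .of_leftQuotient_mem (S := (Language.sepConcat · R) '' Set.range P.leftQuotient ∪
    map some '' Set.range R.leftQuotient ∪ {0}) ?_ (.inl (.inl ⟨P, ⟨[], rfl⟩, rfl⟩)) ?_
  · exact ((hP.finite_range_leftQuotient.image _).union
      (hR.finite_range_leftQuotient.image _)).union (Set.finite_singleton 0)
  · rintro K ((⟨_, ⟨x, rfl⟩, rfl⟩ | ⟨_, ⟨y, rfl⟩, rfl⟩) | rfl) (_ | a)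
    · by_cases hx : [] ∈ P.leftQuotient x
      · rw [leftQuotient_sepConcat_none_of_nil_mem hx]
        exact .inl (.inr ⟨R, ⟨[], rfl⟩, rfl⟩)
      · rw [leftQuotient_sepConcat_none_of_nil_notMem hx]
        exact .inr rfl
    · rw [leftQuotient_sepConcat_some, ← leftQuotient_append]
      exact .inl (.inl ⟨_, ⟨_, rfl⟩, rfl⟩)
    · rw [leftQuotient_map_some_none]
      exact .inr rfl
    · rw [leftQuotient_map_some_some, ← leftQuotient_append]
      exact .inl (.inr ⟨_, ⟨_, rfl⟩, rfl⟩)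
    all_goals exact .inr rfl

end Language

open Language

theorem badPairLanguage_eq_finset_sup {α : Type} (L : Language α)
    {F : Finset (List α × List α)}
    (hF : ∀ p : List α × List α,
      (¬∃ z ∈ L, p.1 <+ z ∧ p.2 <+ z) ↔ ∃ q ∈ F, q.1 <+ p.1 ∧ q.2 <+ p.2) :
    badPairLanguage L = F.sup fun q => sepConcat (L ⊓ superwords q.1) (L ⊓ superwords q.2) := by
  ext w
  simp only [Finset.sup_eq_iSup, Language.mem_iSup, mem_sepConcat, mem_inf, mem_superwords]
  constructor
  · rintro ⟨x, y, ⟨hx, hy, hxy⟩, rfl⟩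
    obtain ⟨q, hq, h₁, h₂⟩ := (hF (x, y)).1 hxy
    exact ⟨q, hq, x, ⟨hx, h₁⟩, y, ⟨hy, h₂⟩, rfl⟩
  · rintro ⟨q, hq, x, ⟨hx, h₁⟩, y, ⟨hy, h₂⟩, rfl⟩
    exact ⟨x, y, ⟨hx, hy, (hF (x, y)).2 ⟨q, hq, h₁, h₂⟩⟩, rfl⟩

theorem isRegular_badPairLanguage {α : Type} [Finite α] {L : Language α} (hL : L.IsRegular) :
    (badPairLanguage L).IsRegular := by
  obtain ⟨F, hF⟩ := (wellQuasiOrdered_sublist.prod wellQuasiOrdered_sublist).exists_finset_basis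
    (U := {p : List α × List α | ¬∃ z ∈ L, p.1 <+ z ∧ p.2 <+ z})
    fun p hp q ⟨h₁, h₂⟩ ⟨z, hz, hz₁, hz₂⟩ => hp ⟨z, hz, h₁.trans hz₁, h₂.trans hz₂⟩
  rw [badPairLanguage_eq_finset_sup L hF]
  exact IsRegular.finset_sup fun q _ =>
    (hL.inf (isRegular_superwords q.1)).sepConcat (hL.inf (isRegular_superwords q.2))

theorem jointEmbedding_iff_badPairLanguage_eq_empty {α : Type} (L : Language α) :
    (∀ x ∈ L, ∀ y ∈ L, ∃ z ∈ L, x <+ z ∧ y <+ z) ↔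
      badPairLanguage L = (∅ : Set (List (Option α))) := by
  refine ⟨fun h => Set.eq_empty_of_forall_notMem ?_, fun h x hx y hy => ?_⟩
  · rintro _ ⟨x, y, ⟨hx, hy, hxy⟩, rfl⟩
    exact hxy (h x hx y hy)
  · by_contra hxy
    have hbad : _ ∈ badPairLanguage L := ⟨x, y, ⟨hx, hy, hxy⟩, rfl⟩
    rw [h] at hbad
    exact hbad

/-- for a regular language `L` over a finite alphabet, the language of
`L`-bad pairs is regular, and `L` has the joint embedding property under the subword
order if and only if this language is empty. -/
theorem bad_word_pairs_regular_and_jep {α : Type} [Fintype α] (L : Language α)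
    (hL : L.IsRegular) :
    (badPairLanguage L).IsRegular ∧
      ((∀ x ∈ L, ∀ y ∈ L, ∃ z ∈ L, x.Sublist z ∧ y.Sublist z) ↔
        badPairLanguage L = (∅ : Set (List (Option α)))) :=
  ⟨isRegular_badPairLanguage hL, jointEmbedding_iff_badPairLanguage_eq_empty L⟩
end

section
/- For every code c (in the sense of Nat.Partrec.Code), the unary language over the one-element alphabet Unit given by { List.replicate n () | n : ℕ and Nat.Partrec.Code.evaln n c 0 = none } — i.e., the set of unary words 1^n such that the partial computable function coded by c does not halt on input 0 within n steps — is a regular language. -/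
/-- Counting DFA capped at `N`. -/
def capDFA (N : ℕ) : DFA Unit (Fin (N + 1)) where
  step i _ := ⟨min ((i : ℕ) + 1) N, by omega⟩
  start := ⟨0, by omega⟩
  accept := {i | (i : ℕ) < N}

lemma capDFA_eval (N : ℕ) (w : List Unit) (i : Fin (N + 1)) :
    ((capDFA N).evalFrom i w : ℕ) = min ((i : ℕ) + w.length) N := by
  induction w generalizing i with
  | nil =>
      have : (i : ℕ) ≤ N := by omega
      simp [DFA.evalFrom]
      omega
  | cons a t ih =>
      have hi : (i : ℕ) ≤ N := by omega
      simp only [DFA.evalFrom, List.foldl_cons] at *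
      rw [ih]
      show min ((min ((i : ℕ) + 1) N) + t.length) N = _
      simp only [List.length_cons]
      omega

lemma capDFA_accept (N : ℕ) (w : List Unit) :
    w ∈ (capDFA N).accepts ↔ w.length < N := by
  rw [DFA.mem_accepts]
  show ((capDFA N).evalFrom (capDFA N).start w : ℕ) < N ↔ _
  rw [capDFA_eval]
  show min ((0 : ℕ) + w.length) N < N ↔ _
  omega

/-- for every code `c`, the unary language
`{ 1^n | the machine coded by c does not halt on input 0 within n steps }` is regular. -/
theorem nonhalting_unary_language_regular (c : Nat.Partrec.Code) :
    Language.IsRegular {w : List Unit |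
      ∃ n : ℕ, Nat.Partrec.Code.evaln n c 0 = none ∧ w = List.replicate n ()} := by
  by_cases h : ∃ n, (Nat.Partrec.Code.evaln n c 0).isSome
  · set N := Nat.find h with hN
    refine ⟨Fin (N + 1), inferInstance, capDFA N, ?_⟩
    ext w
    have key : ∀ n, Nat.Partrec.Code.evaln n c 0 = none ↔ n < N := by
      intro n
      constructor
      · intro hn
        by_contra hlt
        push_neg at hlt
        obtain ⟨x, hx⟩ := Option.isSome_iff_exists.mp (Nat.find_spec h)
        have := Nat.Partrec.Code.evaln_mono hlt hx
        rw [hn] at this; simp at this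
      · intro hn
        have := Nat.find_min h hn
        simpa [Option.isSome_iff_exists, Option.eq_none_iff_forall_not_mem] using this
    rw [capDFA_accept]
    constructor
    · intro hw
      refine ⟨w.length, (key _).mpr hw, ?_⟩
      apply List.ext_getElem <;> simp
    · rintro ⟨n, hn, rfl⟩
      simpa using (key n).mp hn
  · push_neg at h
    refine ⟨Unit, inferInstance, ⟨fun _ _ => (), (), Set.univ⟩, ?_⟩
    ext w
    simp only [DFA.mem_accepts, Set.mem_univ, true_iff, Set.mem_setOf_eq]
    refine ⟨w.length, ?_, ?_⟩
    · have := h w.length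
      simpa [Option.eq_none_iff_forall_not_mem, Option.isSome_iff_exists] using this
    · apply List.ext_getElem <;> simp
end
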